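/- arXiv:1507.07690 — 6 statements merged into one kernel-verified Lean document; each statement's English description precedes it below -/
import Mathlib

section
/- Let μ and μ₁ be probability measures on ℝ with finite first moments such that μ ⪯ μ₁ in convex order. Then for every n > 0, μ(ℝ \ [−(n+1), n+1]) ≤ ∫ (|x| − n)₊ dμ₁. In particular, the family {μ : μ ⪯ μ₁} is uniformly tight. -/
open MeasureTheory Set

/-- The convex order on probability measures on `ℝ`: `μ ⪯ ν` iff `∫ φ dμ ≤ ∫ φ dν`
for all convex functions `φ` for which both integrals exist. -/
def ConvexOrder (μ ν : Measure ℝ) : Prop :=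
  ∀ φ : ℝ → ℝ, ConvexOn ℝ Set.univ φ → Integrable φ μ → Integrable φ ν →
    ∫ x, φ x ∂μ ≤ ∫ x, φ x ∂ν

/-!
The indicator of `ℝ \ [-(n+1), n+1]` lies below the convex function `(|x| - n)₊`, so Markov's
inequality and the convex order bound the tail of `μ` by `∫ (|x| - n)₊ dμ₁`. These integrals
tend to `0` as `n → ∞` by dominated convergence (dominated by `|x|`), which gives tightness.
-/

open Filter Topology

theorem convexOn_posPart_abs_sub (c : ℝ) : ConvexOn ℝ univ (fun x : ℝ => max (|x| - c) 0) :=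
  ((convexOn_univ_norm (E := ℝ)).sub (concaveOn_const c convex_univ)).sup
    (convexOn_const 0 convex_univ)

theorem measureReal_compl_Icc_le_integral_posPart_abs_sub {μ : Measure ℝ} [IsFiniteMeasure μ]
    (hμ : Integrable (fun x => |x|) μ) (c : ℝ) :
    μ.real (Icc (-(c + 1)) (c + 1))ᶜ ≤ ∫ x, max (|x| - c) 0 ∂μ := by
  have htail : (Icc (-(c + 1)) (c + 1))ᶜ ⊆ {x | 1 ≤ max (|x| - c) 0} := fun x hx => by
    have : c + 1 < |x| := by
      rw [mem_compl_iff, mem_Icc, ← abs_le, not_le] at hx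
      exact hx
    show 1 ≤ max (|x| - c) 0
    exact le_max_of_le_left (by linarith)
  calc μ.real (Icc (-(c + 1)) (c + 1))ᶜ
      ≤ μ.real {x | 1 ≤ max (|x| - c) 0} := measureReal_mono htail
    _ = 1 * μ.real {x | 1 ≤ max (|x| - c) 0} := (one_mul _).symm
    _ ≤ ∫ x, max (|x| - c) 0 ∂μ :=
      mul_meas_ge_le_integral_of_nonneg (ae_of_all _ fun _ => le_max_right _ _)
        (hμ.sub (integrable_const c)).pos_part 1

theorem tendsto_integral_posPart_sub_atTop {α : Type*} [MeasurableSpace α] {μ : Measure α}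
    {f : α → ℝ} (hf : Integrable f μ) :
    Tendsto (fun c : ℝ => ∫ x, max (f x - c) 0 ∂μ) atTop (𝓝 0) := by
  have hbound : ∀ᶠ c : ℝ in atTop, ∀ᵐ x ∂μ, ‖max (f x - c) 0‖ ≤ |f x| := by
    filter_upwards [eventually_ge_atTop 0] with c hc
    refine ae_of_all _ fun x => ?_
    rw [Real.norm_of_nonneg (le_max_right _ _)]
    exact max_le (by linarith [le_abs_self (f x)]) (abs_nonneg _)
  have hlim : ∀ x, Tendsto (fun c : ℝ => max (f x - c) 0) atTop (𝓝 0) := fun x =>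
    tendsto_const_nhds.congr' <| by
      filter_upwards [eventually_ge_atTop (f x)] with c hc
      exact (max_eq_right (by linarith)).symm
  simpa using tendsto_integral_filter_of_dominated_convergence (fun x => |f x|)
    (Eventually.of_forall fun c =>
      (hf.aestronglyMeasurable.sub aestronglyMeasurable_const).sup aestronglyMeasurable_const)
    hbound hf.abs (ae_of_all _ hlim)

/-- If `μ ⪯ μ₁` in convex order, then for every `n > 0`,
`μ(ℝ \ [−(n+1), n+1]) ≤ ∫ (|x| − n)₊ dμ₁`.  In particular the family
`{μ : μ ⪯ μ₁}` is uniformly tight. -/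
theorem convex_order_tail_bound_and_tightness
    (μ1 : Measure ℝ) [IsProbabilityMeasure μ1] (hμ1 : Integrable (fun x => |x|) μ1) :
    (∀ (μ : Measure ℝ) [IsProbabilityMeasure μ], Integrable (fun x => |x|) μ →
      ConvexOrder μ μ1 → ∀ n : ℝ, 0 < n →
        (μ (Icc (-(n + 1)) (n + 1))ᶜ).toReal ≤ ∫ x, max (|x| - n) 0 ∂μ1) ∧
    (∀ ε : ℝ, 0 < ε → ∃ K : Set ℝ, IsCompact K ∧
      ∀ (μ : Measure ℝ) [IsProbabilityMeasure μ], Integrable (fun x => |x|) μ →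
        ConvexOrder μ μ1 → (μ Kᶜ).toReal ≤ ε) := by
  have tail : ∀ (μ : Measure ℝ) [IsProbabilityMeasure μ], Integrable (fun x => |x|) μ →
      ConvexOrder μ μ1 → ∀ n : ℝ,
        (μ (Icc (-(n + 1)) (n + 1))ᶜ).toReal ≤ ∫ x, max (|x| - n) 0 ∂μ1 :=
    fun μ _ hμ hco n =>
      (measureReal_compl_Icc_le_integral_posPart_abs_sub hμ n).trans <|
        hco _ (convexOn_posPart_abs_sub n) (hμ.sub (integrable_const n)).pos_part
          (hμ1.sub (integrable_const n)).pos_part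
  refine ⟨fun μ _ hμ hco n _ => tail μ hμ hco n, fun ε hε => ?_⟩
  obtain ⟨n, hn⟩ := ((tendsto_integral_posPart_sub_atTop hμ1).eventually (gt_mem_nhds hε)).exists
  exact ⟨Icc (-(n + 1)) (n + 1), isCompact_Icc, fun μ _ hμ hco => (tail μ hμ hco n).trans hn.le⟩
end

section
/- Let Y and X be integrable real random variables on the same probability space with the same law, and suppose E[Y | X] = X almost surely. Then Y = X almost surely. -/
open MeasureTheory

/-- if `X` and `Y` are integrable real random variables with the same law and
`E[Y | X] = X` almost surely, then `Y = X` almost surely. -/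
theorem eq_of_condexp_eq_self_of_same_law
    {Ω : Type*} {m : MeasurableSpace Ω} {ℙ : Measure Ω} [IsProbabilityMeasure ℙ]
    {X Y : Ω → ℝ} (hXm : Measurable X) (hYm : Measurable Y)
    (hX : Integrable X ℙ) (hY : Integrable Y ℙ)
    (hlaw : ℙ.map X = ℙ.map Y)
    (hcond : ℙ[Y | MeasurableSpace.comap X (borel ℝ)] =ᵐ[ℙ] X) :
    Y =ᵐ[ℙ] X := by
  have hborel : (borel ℝ) = (inferInstance : MeasurableSpace ℝ) :=
    (BorelSpace.measurable_eq (α := ℝ)).symm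
  have hm : MeasurableSpace.comap X (borel ℝ) ≤ m := by
    rw [hborel]
    exact hXm.comap_le
  -- Step 1: for every c, a.e. ω with X ω ≤ c satisfies Y ω ≤ c
  have key : ∀ c : ℝ, ∀ᵐ ω ∂ℙ, X ω ≤ c → Y ω ≤ c := by
    intro c
    set A : Set Ω := X ⁻¹' Set.Iic c with hA
    have hAmX : MeasurableSet[MeasurableSpace.comap X (borel ℝ)] A := by
      refine ⟨Set.Iic c, ?_, rfl⟩
      rw [hborel]; exact measurableSet_Iic
    have hAm : MeasurableSet A := hm _ hAmX
    -- set integral equality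
    have h1 : ∫ ω in A, Y ω ∂ℙ = ∫ ω in A, X ω ∂ℙ := by
      rw [← setIntegral_condExp hm hY hAmX]
      exact integral_congr_ae (ae_restrict_of_ae hcond)
    -- equal laws give equal integrals of (· - c)⁺
    have hg : Measurable fun x : ℝ => max (x - c) 0 :=
      (measurable_id.sub_const c).max measurable_const
    have h2 : ∫ ω, max (Y ω - c) 0 ∂ℙ = ∫ ω, max (X ω - c) 0 ∂ℙ := by
      have hY' : ∫ ω, max (Y ω - c) 0 ∂ℙ
          = ∫ x, max (x - c) 0 ∂(ℙ.map Y) :=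
        (integral_map hYm.aemeasurable hg.aestronglyMeasurable).symm
      have hX' : ∫ ω, max (X ω - c) 0 ∂ℙ
          = ∫ x, max (x - c) 0 ∂(ℙ.map X) :=
        (integral_map hXm.aemeasurable hg.aestronglyMeasurable).symm
      rw [hY', hX', hlaw]
    have hYint : Integrable (fun ω => max (Y ω - c) 0) ℙ := (hY.sub (integrable_const c)).pos_part
    have hXint : Integrable (fun ω => max (X ω - c) 0) ℙ := (hX.sub (integrable_const c)).pos_part
    -- On Aᶜ, X ω > c
    have hAc : ∀ ω ∈ Aᶜ, c < X ω := fun ω hω => not_le.mp hω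
    -- ∫_Aᶜ (X - c) = ∫ max (X - c) 0
    have h3 : ∫ ω in Aᶜ, (X ω - c) ∂ℙ = ∫ ω, max (X ω - c) 0 ∂ℙ := by
      rw [← integral_add_compl hAm hXint]
      have e1 : ∫ ω in A, max (X ω - c) 0 ∂ℙ = 0 := by
        rw [setIntegral_congr_fun hAm (g := fun _ => (0 : ℝ))]
        · simp
        · intro ω hω
          have : X ω ≤ c := hω
          simp [max_eq_right (by linarith : X ω - c ≤ 0)]
      have e2 : ∫ ω in Aᶜ, max (X ω - c) 0 ∂ℙ = ∫ ω in Aᶜ, (X ω - c) ∂ℙ := by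
        refine setIntegral_congr_fun hAm.compl fun ω hω => ?_
        have := hAc ω hω
        simp [max_eq_left (by linarith : (0:ℝ) ≤ X ω - c)]
      rw [e1, e2, zero_add]
    -- ∫_Aᶜ (Y - c) = ∫_Aᶜ (X - c)  (from h1 restricted... need complements)
    have h1' : ∫ ω in Aᶜ, Y ω ∂ℙ = ∫ ω in Aᶜ, X ω ∂ℙ := by
      have hYt := integral_add_compl hAm hY
      have hXt := integral_add_compl hAm hX
      have hEq : ∫ ω, Y ω ∂ℙ = ∫ ω, X ω ∂ℙ := by
        calc ∫ ω, Y ω ∂ℙ = ∫ x, x ∂(ℙ.map Y) :=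
              (integral_map hYm.aemeasurable measurable_id.aestronglyMeasurable).symm
          _ = ∫ x, x ∂(ℙ.map X) := by rw [hlaw]
          _ = ∫ ω, X ω ∂ℙ := integral_map hXm.aemeasurable measurable_id.aestronglyMeasurable
      linarith [hYt, hXt, h1, hEq]
    have h4 : ∫ ω in Aᶜ, (Y ω - c) ∂ℙ = ∫ ω in Aᶜ, (X ω - c) ∂ℙ := by
      rw [integral_sub (hY.restrict) (integrable_const c),
        integral_sub (hX.restrict) (integrable_const c), h1']
    -- pointwise: (Y - c) ≤ max (Y - c) 0 on Aᶜ
    have h5 : ∫ ω in Aᶜ, (Y ω - c) ∂ℙ ≤ ∫ ω in Aᶜ, max (Y ω - c) 0 ∂ℙ :=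
      integral_mono (hY.restrict.sub (integrable_const c)) hYint.restrict
        fun ω => le_max_left _ _
    -- conclude ∫_A max (Y - c) 0 ≤ 0
    have hsplit := integral_add_compl hAm hYint
    have h6 : ∫ ω in A, max (Y ω - c) 0 ∂ℙ ≤ 0 := by
      have : ∫ ω, max (X ω - c) 0 ∂ℙ ≤ ∫ ω in Aᶜ, max (Y ω - c) 0 ∂ℙ := by
        rw [← h3, ← h4]; exact h5
      linarith [hsplit, h2]
    have h7 : ∫ ω in A, max (Y ω - c) 0 ∂ℙ = 0 :=
      le_antisymm h6 (integral_nonneg fun ω => le_max_right _ _)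
    have h8 : (fun ω => max (Y ω - c) 0) =ᵐ[ℙ.restrict A] 0 :=
      (integral_eq_zero_iff_of_nonneg_ae
        (Filter.Eventually.of_forall fun ω => le_max_right _ _) hYint.restrict).mp h7
    have h9 : ∀ᵐ ω ∂ℙ, ω ∈ A → max (Y ω - c) 0 = 0 :=
      (ae_restrict_iff' hAm).mp h8
    filter_upwards [h9] with ω hω hXc
    have := hω hXc
    by_contra hlt
    push_neg at hlt
    rw [max_eq_left (by linarith : (0:ℝ) ≤ Y ω - c)] at this
    linarith
  -- Step 2: Y ≤ X a.e.
  have hle : ∀ᵐ ω ∂ℙ, Y ω ≤ X ω := by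
    have hall : ∀ᵐ ω ∂ℙ, ∀ q : ℚ, X ω ≤ (q : ℝ) → Y ω ≤ (q : ℝ) :=
      (ae_all_iff).mpr fun q => key q
    filter_upwards [hall] with ω hω
    by_contra hlt
    push_neg at hlt
    obtain ⟨q, hq1, hq2⟩ := exists_rat_btwn hlt
    exact absurd (hω q hq1.le) (not_le.mpr hq2)
  -- Step 3: equal expectations force equality
  have hEq : ∫ ω, Y ω ∂ℙ = ∫ ω, X ω ∂ℙ := by
    calc ∫ ω, Y ω ∂ℙ = ∫ x, x ∂(ℙ.map Y) :=
          (integral_map hYm.aemeasurable measurable_id.aestronglyMeasurable).symm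
      _ = ∫ x, x ∂(ℙ.map X) := by rw [hlaw]
      _ = ∫ ω, X ω ∂ℙ := integral_map hXm.aemeasurable measurable_id.aestronglyMeasurable
  have hzero : ∫ ω, (X ω - Y ω) ∂ℙ = 0 := by
    rw [integral_sub hX hY]; linarith
  have hnn : 0 ≤ᵐ[ℙ] fun ω => X ω - Y ω := by
    filter_upwards [hle] with ω hω
    simpa using sub_nonneg.mpr hω
  have := (integral_eq_zero_iff_of_nonneg_ae hnn (hX.sub hY)).mp hzero
  filter_upwards [this] with ω hω
  have : X ω - Y ω = 0 := hω
  linarith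
end

section
/- A function f: Q → ℝ, where Q ⊆ [0,1] is countable and dense with 1 ∈ Q, is the restriction to Q of a càdlàg function g: [0,1] → ℝ if and only if f is right-continuous on Q, bounded, has left limits along Q at every point, and for all rationals a < b the number of upcrossings of f through [a,b] is finite. -/
open Set Filter Topology

/-- `g` is càdlàg on `[0,1]`: right-continuous on `[0,1)` and with left limits on `(0,1]`. -/
def CadlagOn01 (g : ℝ → ℝ) : Prop :=
  (∀ x ∈ Ico (0 : ℝ) 1, Tendsto g (𝓝[>] x) (𝓝 (g x))) ∧
  (∀ x ∈ Ioc (0 : ℝ) 1, ∃ L : ℝ, Tendsto g (𝓝[<] x) (𝓝 L))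

/-- The number of upcrossings of `f` (observed along `Q`) through `[a,b]` is at most `N`. -/
def UpcrossingsLE (f : ℝ → ℝ) (Q : Set ℝ) (a b : ℝ) (N : ℕ) : Prop :=
  ∀ (n : ℕ) (q : ℕ → ℝ),
    (∀ i < 2 * n, q i ∈ Q) →
    (∀ i j, i < j → j < 2 * n → q i < q j) →
    (∀ i < n, f (q (2 * i)) < a ∧ b < f (q (2 * i + 1))) →
    n ≤ N

/-- A càdlàg function on `[0,1]` admits a finite partition into half-open pieces
on each of which its oscillation is at most `c`. -/
lemma cadlag_partition (g : ℝ → ℝ) (hg : CadlagOn01 g) {c : ℝ} (hc : 0 < c) :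
    ∃ (m : ℕ) (s : ℕ → ℝ), s 0 = 0 ∧ s m = 1 ∧
      (∀ i j, i < j → j ≤ m → s i < s j) ∧
      (∀ i, i < m → ∀ y ∈ Ico (s i) (s (i+1)), ∀ z ∈ Ico (s i) (s (i+1)),
        |g y - g z| ≤ c) := by
  classical
  set A : Set ℝ := {t | t ∈ Icc (0:ℝ) 1 ∧ ∃ (m : ℕ) (s : ℕ → ℝ), s 0 = 0 ∧ s m = t ∧
      (∀ i j, i < j → j ≤ m → s i < s j) ∧
      (∀ i, i < m → ∀ y ∈ Ico (s i) (s (i+1)), ∀ z ∈ Ico (s i) (s (i+1)),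
        |g y - g z| ≤ c)} with hA
  have h0A : (0:ℝ) ∈ A := by
    refine ⟨⟨le_refl 0, zero_le_one⟩, 0, fun _ => 0, rfl, rfl, ?_, ?_⟩
    · intro i j hij hj; omega
    · intro i hi; omega
  have hbdd : BddAbove A := ⟨1, fun t ht => ht.1.2⟩
  have hAne : A.Nonempty := ⟨0, h0A⟩
  -- extension lemma
  have ext : ∀ t u, t ∈ A → t < u → u ≤ 1 →
      (∀ y ∈ Ico t u, ∀ z ∈ Ico t u, |g y - g z| ≤ c) → u ∈ A := by
    rintro t u ⟨⟨ht0, _⟩, m, s, hs0, hsm, hstrict, hp⟩ htu hu1 hosc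
    refine ⟨⟨le_trans ht0 htu.le, hu1⟩, m + 1, fun i => if i ≤ m then s i else u,
      ?_, ?_, ?_, ?_⟩
    · simpa using hs0
    · simp
    · intro i j hij hj
      have hi : i ≤ m := by omega
      rcases le_or_gt j m with hjm | hjm
      · simpa [hi, hjm] using hstrict i j hij hjm
      · have hj' : ¬ (j ≤ m) := by omega
        have : s i ≤ t := by
          rcases eq_or_lt_of_le hi with rfl | h
          · exact hsm.le
          · exact (hsm ▸ hstrict i m h le_rfl).le
        simp only [if_pos hi, if_neg hj']
        linarith
    · intro i hi
      rcases lt_or_eq_of_le (Nat.lt_succ_iff.mp hi) with h | rfl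
      · have h1 : i ≤ m := h.le
        have h2 : i + 1 ≤ m := h
        simpa [h1, h2] using hp i h
      · have h1 : i ≤ i := le_refl i
        have h2 : ¬ (i + 1 ≤ i) := by omega
        simpa [h1, h2, hsm] using hosc
  set T := sSup A with hT
  have hT0 : 0 ≤ T := le_csSup hbdd h0A
  have hT1 : T ≤ 1 := csSup_le hAne (fun t ht => ht.1.2)
  have hTA : T ∈ A := by
    rcases eq_or_lt_of_le hT0 with h | h
    · exact h ▸ h0A
    · obtain ⟨L, hL⟩ := hg.2 T ⟨h, hT1⟩
      have := Metric.tendsto_nhds.mp hL (c/2) (by linarith)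
      rw [Metric.nhdsWithin_basis_ball.eventually_iff] at this
      obtain ⟨δ, hδ, hball⟩ := this
      obtain ⟨t, htA, htδ⟩ := exists_lt_of_lt_csSup hAne (show T - δ < T by linarith)
      have htT : t ≤ T := le_csSup hbdd htA
      rcases eq_or_lt_of_le htT with rfl | hlt
      · exact htA
      · refine ext t T htA hlt hT1 ?_
        have key : ∀ y ∈ Ico t T, dist (g y) L < c / 2 := by
          intro y hy
          refine hball ⟨Metric.mem_ball.2 ?_, hy.2⟩
          rw [Real.dist_eq, abs_lt]
          constructor <;> [linarith [hy.1]; linarith [hy.2]]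
        intro y hy z hz
        have h1 := key y hy
        have h2 := key z hz
        rw [Real.dist_eq] at h1 h2
        have := abs_lt.1 h1
        have := abs_lt.1 h2
        rw [abs_le]
        constructor <;> linarith [abs_lt.1 h1, abs_lt.1 h2]
  have h1A : (1:ℝ) ∈ A := by
    by_contra h1
    have hTlt : T < 1 := lt_of_le_of_ne hT1 (fun h => h1 (h ▸ hTA))
    have hrc := hg.1 T ⟨hT0, hTlt⟩
    have := Metric.tendsto_nhds.mp hrc (c/2) (by linarith)
    rw [Metric.nhdsWithin_basis_ball.eventually_iff] at this
    obtain ⟨δ, hδ, hball⟩ := this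
    set u := min (T + δ) 1 with hu
    have hu1 : u ≤ 1 := min_le_right _ _
    have hTu : T < u := lt_min (by linarith) hTlt
    have huA : u ∈ A := by
      refine ext T u hTA hTu hu1 ?_
      have key : ∀ y ∈ Ico T u, dist (g y) (g T) ≤ c / 2 := by
        intro y hy
        rcases eq_or_lt_of_le hy.1 with rfl | hlt
        · simp; linarith
        · refine le_of_lt (hball ⟨Metric.mem_ball.2 ?_, hlt⟩)
          rw [Real.dist_eq, abs_lt]
          have : y < T + δ := lt_of_lt_of_le hy.2 (min_le_left _ _)
          constructor <;> linarith
      intro y hy z hz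
      have h1 := key y hy
      have h2 := key z hz
      rw [Real.dist_eq] at h1 h2
      rw [abs_le]
      constructor <;> linarith [abs_le.1 h1, abs_le.1 h2]
    have := le_csSup hbdd huA
    rw [← hT] at this
    linarith
  exact h1A.2

lemma cadlag_struct (g : ℝ → ℝ) (hg : CadlagOn01 g) {c : ℝ} (hc : 0 < c) :
    ∃ (m : ℕ) (ι : ℝ → ℕ) (B : ℝ),
      (∀ x, x ∈ Icc (0:ℝ) 1 → ι x ≤ m) ∧
      (∀ x y, 0 ≤ x → x ≤ y → ι x ≤ ι y) ∧
      (∀ x y, x ∈ Icc (0:ℝ) 1 → y ∈ Icc (0:ℝ) 1 → x < y → ι x = ι y → |g x - g y| ≤ c) ∧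
      (∀ x ∈ Icc (0:ℝ) 1, |g x| ≤ B) := by
  classical
  obtain ⟨m, s, hs0, hsm, hstrict, hp⟩ := cadlag_partition g hg hc
  set ι : ℝ → ℕ := fun x => Nat.findGreatest (fun i => s i ≤ x) m with hι
  have hle : ∀ x, 0 ≤ x → s (ι x) ≤ x := fun x hx =>
    Nat.findGreatest_spec (P := fun i => s i ≤ x) (Nat.zero_le m) (by simpa [hs0] using hx)
  have hlem : ∀ x, ι x ≤ m := fun x => Nat.findGreatest_le m
  have hub : ∀ x, 0 ≤ x → ι x < m → x < s (ι x + 1) := by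
    intro x hx h
    by_contra hcon
    push_neg at hcon
    have h2 : ι x + 1 ≤ ι x := Nat.le_findGreatest (show ι x + 1 ≤ m by omega) hcon
    omega
  have hmono : ∀ x y, 0 ≤ x → x ≤ y → ι x ≤ ι y := fun x y hx hxy =>
    Nat.le_findGreatest (P := fun i => s i ≤ y) (hlem x) (le_trans (hle x hx) hxy)
  have hsame : ∀ x y, x ∈ Icc (0:ℝ) 1 → y ∈ Icc (0:ℝ) 1 → x < y → ι x = ι y →
      |g x - g y| ≤ c := by
    intro x y hx hy hxy heq
    rcases lt_or_eq_of_le (hlem x) with h | h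
    · refine hp (ι x) h x ⟨hle x hx.1, hub x hx.1 h⟩ y ⟨?_, ?_⟩
      · rw [heq]; exact hle y hy.1
      · rw [heq] at h ⊢; exact hub y hy.1 h
    · exfalso
      have := hle x hx.1
      rw [h, hsm] at this
      linarith [hy.2]
  refine ⟨m, ι, (Finset.range (m+1)).sup' (by simp) (fun i => |g (s i)|) + c,
    fun x _ => hlem x, hmono, hsame, ?_⟩
  intro x hx
  have hsup : ∀ i, i ≤ m → |g (s i)| ≤ (Finset.range (m+1)).sup' (by simp) (fun i => |g (s i)|) :=
    fun i hi => Finset.le_sup' (fun i => |g (s i)|) (Finset.mem_range.2 (Nat.lt_succ_of_le hi))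
  rcases lt_or_eq_of_le (hlem x) with h | h
  · have h1 : s (ι x) ≤ x := hle x hx.1
    have h2 : x < s (ι x + 1) := hub x hx.1 h
    have h3 : s (ι x) < s (ι x + 1) := hstrict _ _ (by omega) (by omega)
    rcases eq_or_lt_of_le h1 with he | hlt
    · rw [← he]
      calc |g (s (ι x))| ≤ _ := hsup _ (hlem x)
        _ ≤ _ := by linarith
    · have hpc := hp (ι x) h (s (ι x)) ⟨le_refl _, h3⟩ x ⟨h1, h2⟩
      have h4 := hsup (ι x) (hlem x)
      have h5 : |g x - g (s (ι x))| ≤ c := by rwa [abs_sub_comm]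
      linarith [abs_sub_abs_le_abs_sub (g x) (g (s (ι x)))]
  · have h1 : s (ι x) ≤ x := hle x hx.1
    rw [h, hsm] at h1
    have hx1 : x = 1 := le_antisymm hx.2 h1
    rw [hx1, ← hsm]
    calc |g (s m)| ≤ _ := hsup m le_rfl
      _ ≤ _ := by linarith

theorem aux_fwd
    (Q : Set ℝ) (hQsub : Q ⊆ Icc (0 : ℝ) 1)
    (f : ℝ → ℝ) (g : ℝ → ℝ) (hg : CadlagOn01 g) (hfg : ∀ q ∈ Q, g q = f q) :
    ((∀ q ∈ Q, q < 1 → Tendsto f (𝓝[Q ∩ Ioi q] q) (𝓝 (f q))) ∧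
       (∃ M : ℝ, ∀ q ∈ Q, |f q| ≤ M) ∧
       (∀ x ∈ Ioc (0 : ℝ) 1, ∃ L : ℝ, Tendsto f (𝓝[Q ∩ Iio x] x) (𝓝 L)) ∧
       (∀ a b : ℚ, a < b → ∃ N : ℕ, UpcrossingsLE f Q a b N)) := by
  have hcongr : ∀ x : ℝ, ∀ s : Set ℝ, s ⊆ Q → g =ᶠ[𝓝[s] x] f :=
    fun x s hs => mem_of_superset self_mem_nhdsWithin (fun y hy => hfg y (hs hy))
  refine ⟨?_, ?_, ?_, ?_⟩
  · intro q hq hq1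
    have h := hg.1 q ⟨(hQsub hq).1, hq1⟩
    have h2 : Tendsto g (𝓝[Q ∩ Ioi q] q) (𝓝 (g q)) :=
      h.mono_left (nhdsWithin_mono q inter_subset_right)
    rw [hfg q hq] at h2
    exact Tendsto.congr' (hcongr q _ inter_subset_left) h2
  · obtain ⟨m, ι, B, _, _, _, hB⟩ := cadlag_struct g hg one_pos
    exact ⟨B, fun q hq => by rw [← hfg q hq]; exact hB q (hQsub hq)⟩
  · intro x hx
    obtain ⟨L, hL⟩ := hg.2 x hx
    exact ⟨L, Tendsto.congr' (hcongr x _ inter_subset_left)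
      (hL.mono_left (nhdsWithin_mono x inter_subset_right))⟩
  · intro a b hab
    have hc : (0:ℝ) < (b:ℝ) - (a:ℝ) := by
      have : (a:ℝ) < (b:ℝ) := by exact_mod_cast hab
      linarith
    obtain ⟨m, ι, B, hιm, hmono, hsame, _⟩ := cadlag_struct g hg hc
    refine ⟨m + 1, ?_⟩
    intro n q hqQ hqmono hcross
    rcases Nat.eq_zero_or_pos n with rfl | hn
    · exact Nat.zero_le _
    have step : ∀ i, i < n → ι (q (2*i)) < ι (q (2*i+1)) := by
      intro i hi
      have hq1 : q (2*i) ∈ Q := hqQ _ (by omega)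
      have hq2 : q (2*i+1) ∈ Q := hqQ _ (by omega)
      have hlt : q (2*i) < q (2*i+1) := hqmono _ _ (by omega) (by omega)
      have hle' : ι (q (2*i)) ≤ ι (q (2*i+1)) := hmono _ _ (hQsub hq1).1 hlt.le
      rcases lt_or_eq_of_le hle' with h | he
      · exact h
      exfalso
      have hd := hsame _ _ (hQsub hq1) (hQsub hq2) hlt he
      have h1 : g (q (2*i)) < a := by rw [hfg _ hq1]; exact (hcross i hi).1
      have h2 : (b:ℝ) < g (q (2*i+1)) := by rw [hfg _ hq2]; exact (hcross i hi).2
      have := abs_le.1 hd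
      linarith [this.1, this.2, neg_abs_le (g (q (2*i)) - g (q (2*i+1)))]
    have chain : ∀ i, i < n → i ≤ ι (q (2*i)) := by
      intro i
      induction i with
      | zero => intro _; exact Nat.zero_le _
      | succ k ih =>
        intro hk
        have h1 : k < n := by omega
        have h2 := step k h1
        have h3 : ι (q (2*k+1)) ≤ ι (q (2*(k+1))) :=
          hmono _ _ (hQsub (hqQ _ (by omega))).1 (hqmono _ _ (by omega) (by omega)).le
        have := ih (by omega)
        omega
    have h4 := chain (n-1) (by omega)
    have h5 := hιm (q (2*(n-1))) (hQsub (hqQ _ (by omega)))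
    omega

theorem aux_rev
    (Q : Set ℝ) (hQsub : Q ⊆ Icc (0 : ℝ) 1)
    (hQdense : Icc (0 : ℝ) 1 ⊆ closure Q) (h1Q : (1 : ℝ) ∈ Q)
    (f : ℝ → ℝ)
    (h1 : ∀ q ∈ Q, q < 1 → Tendsto f (𝓝[Q ∩ Ioi q] q) (𝓝 (f q)))
    (hMex : ∃ M : ℝ, ∀ q ∈ Q, |f q| ≤ M)
    (h3 : ∀ x ∈ Ioc (0 : ℝ) 1, ∃ L : ℝ, Tendsto f (𝓝[Q ∩ Iio x] x) (𝓝 L))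
    (h4 : ∀ a b : ℚ, a < b → ∃ N : ℕ, UpcrossingsLE f Q (a : ℝ) (b : ℝ) N) :
    ∃ g : ℝ → ℝ, CadlagOn01 g ∧ ∀ q ∈ Q, g q = f q := by
  classical
  obtain ⟨M, hM⟩ := hMex
  -- density of Q on the right of any point of [0,1)
  have hQpt : ∀ x : ℝ, 0 ≤ x → x < 1 → ∀ ε : ℝ, 0 < ε → ∃ p ∈ Q, x < p ∧ p < x + ε := by
    intro x hx0 hx1 ε hε
    set w := min (x + ε) 1 with hw
    have hxw : x < w := lt_min (by linarith) hx1
    set z := (x + w) / 2 with hz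
    have hz1 : x < z := by rw [hz]; linarith
    have hz2 : z < w := by rw [hz]; linarith
    have hzI : z ∈ Icc (0:ℝ) 1 := ⟨by linarith, le_of_lt (lt_of_lt_of_le hz2 (min_le_right _ _))⟩
    have hzc := hQdense hzI
    rw [Metric.mem_closure_iff] at hzc
    obtain ⟨p, hpQ, hpd⟩ := hzc (min (z - x) (w - z)) (lt_min (by linarith) (by linarith))
    rw [Real.dist_eq, abs_lt] at hpd
    have hd1 : z - p < z - x := lt_of_lt_of_le hpd.2 (min_le_left _ _)
    have hd2 : -(w - z) < z - p := lt_of_le_of_lt (neg_le_neg (min_le_right _ _)) hpd.1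
    refine ⟨p, hpQ, by linarith, ?_⟩
    have : p < w := by linarith
    exact lt_of_lt_of_le this (min_le_left _ _)
  have hne : ∀ x : ℝ, 0 ≤ x → x < 1 → (𝓝[Q ∩ Ioi x] x).NeBot := by
    intro x hx0 hx1
    rw [← mem_closure_iff_nhdsWithin_neBot, Metric.mem_closure_iff]
    intro ε hε
    obtain ⟨p, hpQ, hp1, hp2⟩ := hQpt x hx0 hx1 ε hε
    exact ⟨p, ⟨hpQ, hp1⟩, by rw [Real.dist_eq, abs_lt]; constructor <;> linarith⟩
  -- existence of right limits along Q at every point of [0,1)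
  have hrlim : ∀ x : ℝ, 0 ≤ x → x < 1 → ∃ L : ℝ, Tendsto f (𝓝[Q ∩ Ioi x] x) (𝓝 L) := by
    intro x hx0 hx1
    haveI := hne x hx0 hx1
    have hevQ : ∀ᶠ p in 𝓝[Q ∩ Ioi x] x, p ∈ Q := mem_of_superset self_mem_nhdsWithin
      (fun p hp => hp.1)
    have hbd1 : (𝓝[Q ∩ Ioi x] x).IsBoundedUnder (· ≤ ·) f :=
      isBoundedUnder_of_eventually_le (a := M)
        (hevQ.mono fun p hp => (abs_le.1 (hM p hp)).2)
    have hbd2 : (𝓝[Q ∩ Ioi x] x).IsBoundedUnder (· ≥ ·) f :=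
      isBoundedUnder_of_eventually_ge (a := -M)
        (hevQ.mono fun p hp => (abs_le.1 (hM p hp)).1)
    have hlu : liminf f (𝓝[Q ∩ Ioi x] x) ≤ limsup f (𝓝[Q ∩ Ioi x] x) :=
      liminf_le_limsup hbd1 hbd2
    rcases eq_or_lt_of_le hlu with he | hlt
    · exact ⟨limsup f (𝓝[Q ∩ Ioi x] x), tendsto_of_liminf_eq_limsup he rfl hbd1 hbd2⟩
    exfalso
    obtain ⟨a, ha1, ha2⟩ := exists_rat_btwn hlt
    obtain ⟨b, hb1, hb2⟩ := exists_rat_btwn ha2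
    have hab : a < b := by exact_mod_cast hb1
    obtain ⟨N, hN⟩ := h4 a b hab
    have hfa : ∃ᶠ y in 𝓝[Q ∩ Ioi x] x, f y < (a:ℝ) :=
      frequently_lt_of_liminf_lt hbd1.isCoboundedUnder_ge ha1
    have hfb : ∃ᶠ y in 𝓝[Q ∩ Ioi x] x, (b:ℝ) < f y :=
      frequently_lt_of_lt_limsup hbd2.isCoboundedUnder_le hb2
    -- for any w > x we can find suitable points of Q in (x, w)
    have hstep : ∀ (j : ℕ) (w : ℝ), x < w →
        ∃ p, p ∈ Q ∧ x < p ∧ p < w ∧ (if j % 2 = 0 then (b:ℝ) < f p else f p < (a:ℝ)) := by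
      intro j w hw
      by_cases hj : j % 2 = 0
      · obtain ⟨p, hp1, hp2⟩ := (Metric.nhdsWithin_basis_ball.frequently_iff.1 hfb)
          (w - x) (by linarith)
        obtain ⟨hball, hpQ, hpx⟩ := hp1
        rw [Metric.mem_ball, Real.dist_eq, abs_lt] at hball
        exact ⟨p, hpQ, hpx, by linarith [hball.2], by simp [hj, hp2]⟩
      · obtain ⟨p, hp1, hp2⟩ := (Metric.nhdsWithin_basis_ball.frequently_iff.1 hfa)
          (w - x) (by linarith)
        obtain ⟨hball, hpQ, hpx⟩ := hp1
        rw [Metric.mem_ball, Real.dist_eq, abs_lt] at hball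
        exact ⟨p, hpQ, hpx, by linarith [hball.2], by simp [hj, hp2]⟩
    choose pick hpQ' hpx' hpw' hpf' using hstep
    -- recursively build a strictly decreasing sequence in Q ∩ (x, ∞)
    set P : ℕ → {y : ℝ // x < y} := fun j => Nat.rec
      ⟨pick 0 (x+1) (by linarith), hpx' 0 (x+1) (by linarith)⟩
      (fun k prev => ⟨pick (k+1) prev.1 prev.2, hpx' (k+1) prev.1 prev.2⟩) j with hP
    have hPQ : ∀ j, (P j).1 ∈ Q := by
      intro j
      cases j with
      | zero => exact hpQ' 0 (x+1) (by linarith)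
      | succ k => exact hpQ' (k+1) (P k).1 (P k).2
    have hPdec : ∀ k, (P (k+1)).1 < (P k).1 := fun k => hpw' (k+1) (P k).1 (P k).2
    have hPpar : ∀ j, if j % 2 = 0 then (b:ℝ) < f (P j).1 else f (P j).1 < (a:ℝ) := by
      intro j
      cases j with
      | zero => exact hpf' 0 (x+1) (by linarith)
      | succ k => exact hpf' (k+1) (P k).1 (P k).2
    have hPanti : StrictAnti (fun j => (P j).1) := strictAnti_nat_of_succ_lt hPdec
    set n := N + 1 with hn
    have := hN n (fun i => (P (2*n - 1 - i)).1) (fun i _ => hPQ _)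
      (fun i j hij hj => hPanti (show 2*n-1-j < 2*n-1-i by omega)) ?_
    · omega
    intro i hi
    constructor
    · have h := hPpar (2*n - 1 - 2*i)
      have hodd : ¬ ((2*n - 1 - 2*i) % 2 = 0) := by omega
      simpa [hodd] using h
    · have h := hPpar (2*n - 1 - (2*i+1))
      have heven : (2*n - 1 - (2*i+1)) % 2 = 0 := by omega
      simpa [heven] using h
  -- define g
  choose! L hL using hrlim
  set g : ℝ → ℝ := fun x => if x < 1 then L x else f 1 with hg
  have hgL : ∀ x : ℝ, 0 ≤ x → x < 1 → Tendsto f (𝓝[Q ∩ Ioi x] x) (𝓝 (g x)) := by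
    intro x h0 hx1
    have : g x = L x := by rw [hg]; simp [hx1]
    rw [this]
    exact hL x h0 hx1
  have hgQ : ∀ q ∈ Q, g q = f q := by
    intro p hp
    rcases lt_or_eq_of_le (hQsub hp).2 with hlt | he
    · haveI := hne p (hQsub hp).1 hlt
      exact tendsto_nhds_unique (hgL p (hQsub hp).1 hlt) (h1 p hp hlt)
    · rw [hg]; simp [he]
  refine ⟨g, ⟨?_, ?_⟩, hgQ⟩
  · -- right continuity
    intro x hx
    rw [Metric.tendsto_nhds]
    intro ε hε
    have hgx := hgL x hx.1 hx.2
    have hev := Metric.tendsto_nhds.1 hgx (ε/2) (by linarith)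
    rw [Metric.nhdsWithin_basis_ball.eventually_iff] at hev
    obtain ⟨δ, hδ, hball⟩ := hev
    have hsub : Ioo x (min (x+δ) 1) ∈ 𝓝[>] x :=
      Ioo_mem_nhdsGT_of_mem ⟨le_refl x, lt_min (by linarith) hx.2⟩
    filter_upwards [hsub] with y hy
    have hy1 : y < 1 := lt_of_lt_of_le hy.2 (min_le_right _ _)
    have hyδ : y < x + δ := lt_of_lt_of_le hy.2 (min_le_left _ _)
    have hy0 : 0 ≤ y := le_trans hx.1 hy.1.le
    haveI := hne y hy0 hy1
    have hgy := hgL y hy0 hy1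
    have hev2 : ∀ᶠ p in 𝓝[Q ∩ Ioi y] y, f p ∈ Metric.closedBall (g x) (ε/2) := by
      rw [Metric.nhdsWithin_basis_ball.eventually_iff]
      refine ⟨x + δ - y, by linarith, ?_⟩
      rintro p ⟨hb, hpQ, hpy⟩
      rw [Metric.mem_ball, Real.dist_eq, abs_lt] at hb
      have hpx : x < p := lt_trans hy.1 hpy
      have hpδ : p < x + δ := by linarith [hb.2]
      refine Metric.mem_closedBall.2 (le_of_lt (hball ⟨Metric.mem_ball.2 ?_, hpQ, hpx⟩))
      rw [Real.dist_eq, abs_lt]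
      constructor <;> linarith
    have hmem : g y ∈ Metric.closedBall (g x) (ε/2) :=
      Metric.isClosed_closedBall.mem_of_tendsto hgy hev2
    have := Metric.mem_closedBall.1 hmem
    calc dist (g y) (g x) ≤ ε/2 := this
      _ < ε := by linarith
  · -- left limits
    intro x hx
    obtain ⟨L', hL'⟩ := h3 x hx
    refine ⟨L', ?_⟩
    rw [Metric.tendsto_nhds]
    intro ε hε
    have hev := Metric.tendsto_nhds.1 hL' (ε/2) (by linarith)
    rw [Metric.nhdsWithin_basis_ball.eventually_iff] at hev
    obtain ⟨δ, hδ, hball⟩ := hev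
    have hsub : Ioo (max (x-δ) 0) x ∈ 𝓝[<] x :=
      Ioo_mem_nhdsLT_of_mem ⟨max_lt (by linarith) hx.1, le_refl x⟩
    filter_upwards [hsub] with y hy
    have hy0 : 0 ≤ y := le_of_lt (lt_of_le_of_lt (le_max_right _ _) hy.1)
    have hyδ : x - δ < y := lt_of_le_of_lt (le_max_left _ _) hy.1
    have hy1 : y < 1 := lt_of_lt_of_le hy.2 hx.2
    haveI := hne y hy0 hy1
    have hgy := hgL y hy0 hy1
    have hev2 : ∀ᶠ p in 𝓝[Q ∩ Ioi y] y, f p ∈ Metric.closedBall L' (ε/2) := by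
      rw [Metric.nhdsWithin_basis_ball.eventually_iff]
      refine ⟨x - y, by linarith [hy.2], ?_⟩
      rintro p ⟨hb, hpQ, hpy⟩
      rw [Metric.mem_ball, Real.dist_eq, abs_lt] at hb
      have hyp : y < p := hpy
      have hpx : p < x := by linarith [hb.2]
      refine Metric.mem_closedBall.2 (le_of_lt (hball ⟨Metric.mem_ball.2 ?_, hpQ, hpx⟩))
      rw [Real.dist_eq, abs_lt]
      constructor <;> linarith
    have hmem : g y ∈ Metric.closedBall L' (ε/2) :=
      Metric.isClosed_closedBall.mem_of_tendsto hgy hev2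
    have := Metric.mem_closedBall.1 hmem
    calc dist (g y) L' ≤ ε/2 := this
      _ < ε := by linarith


/-- for countable dense `Q ⊆ [0,1]` with `1 ∈ Q`, a function `f` on `Q` is
the restriction of a càdlàg function `g : [0,1] → ℝ` iff `f` is right-continuous along `Q`,
bounded on `Q`, has left limits along `Q` at every point, and has finitely many upcrossings
through every rational interval. -/
theorem mem_DQ_iff
    (Q : Set ℝ) (hQsub : Q ⊆ Icc (0 : ℝ) 1) (hQc : Q.Countable)
    (hQdense : Icc (0 : ℝ) 1 ⊆ closure Q) (h1Q : (1 : ℝ) ∈ Q)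
    (f : ℝ → ℝ) :
    (∃ g : ℝ → ℝ, CadlagOn01 g ∧ ∀ q ∈ Q, g q = f q) ↔
      ((∀ q ∈ Q, q < 1 → Tendsto f (𝓝[Q ∩ Ioi q] q) (𝓝 (f q))) ∧
       (∃ M : ℝ, ∀ q ∈ Q, |f q| ≤ M) ∧
       (∀ x ∈ Ioc (0 : ℝ) 1, ∃ L : ℝ, Tendsto f (𝓝[Q ∩ Iio x] x) (𝓝 L)) ∧
       (∀ a b : ℚ, a < b → ∃ N : ℕ, UpcrossingsLE f Q a b N)) := by
  constructor
  · rintro ⟨g, hg, hfg⟩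
    exact aux_fwd Q hQsub f g hg hfg
  · rintro ⟨ha, hb, hc, hd⟩
    exact aux_rev Q hQsub hQdense h1Q f ha hb hc hd
end

section
/- For probability measures α, β on ℝ with finite first moments and barycenters a = ∫y dα, b = ∫y dβ, the equality W(α,β) = |a − b| holds if and only if α and β are comparable in first-order stochastic dominance (i.e., α ≤_st β when a ≤ b), equivalently iff there exists a coupling γ ∈ Π(α,β) that is isotone in the sense that γ({(y,y') : y ≤ y'}) = 1 (assuming a ≤ b). -/
/-!
Every coupling `γ` of `α` and `β` has cost `∫ |x - y| dγ ≥ ∫ (y - x) dγ = b - a`, with equality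
exactly when `γ` is concentrated on `{x ≤ y}`. So an isotone coupling attains `W(α, β) = b - a`,
and integrating an increasing `f` along it gives `α ≤_st β`. Stochastic dominance means
`F_β ≤ F_α`, and then the quantile coupling `u ↦ (F_α⁻¹ u, F_β⁻¹ u)` of the uniform law on `(0, 1)`
is isotone. Conversely, if `W(α, β) = b - a` there are couplings whose excess cost
`2 ∫ (x - y)⁺ dγ` is arbitrarily small; by Markov's inequality they give arbitrarily little mass
to `{x - y ≥ t - s}`, which forces `F_β(s) ≤ F_α(t)` for `s < t`, and right-continuity of `F_α`
gives `F_β ≤ F_α`.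
-/

open MeasureTheory

/-- The `L¹`-Wasserstein distance between two probability measures on `ℝ`. -/
noncomputable def W1 (α β : Measure ℝ) : ℝ :=
  sInf {r : ℝ | ∃ γ : Measure (ℝ × ℝ), IsProbabilityMeasure γ ∧
    γ.map Prod.fst = α ∧ γ.map Prod.snd = β ∧ r = ∫ p, |p.1 - p.2| ∂γ}

/-- First-order stochastic dominance: `∫ f dα ≤ ∫ f dβ` for all bounded increasing `f`. -/
def StochDom (α β : Measure ℝ) : Prop :=
  ∀ f : ℝ → ℝ, Monotone f → (∃ C, ∀ x, |f x| ≤ C) → ∫ x, f x ∂α ≤ ∫ x, f x ∂β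

open ProbabilityTheory Set

lemma StieltjesFunction.le_apply_of_forall_lt {R : Type*} [ConditionallyCompleteLinearOrder R]
    [TopologicalSpace R] [OrderTopology R] [DenselyOrdered R] [NoMaxOrder R]
    (f : StieltjesFunction R) {x : R} {c : ℝ} (h : ∀ y, x < y → c ≤ f y) : c ≤ f x := by
  rw [← f.iInf_Ioi_eq x]
  exact le_ciInf fun y => h y y.2

-- Only meaningful on `Ioo 0 1`: elsewhere the `sInf` is a junk value.
noncomputable def quantile (μ : Measure ℝ) (u : ℝ) : ℝ := sInf {x | u ≤ cdf μ x}

section Quantile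

variable (μ : Measure ℝ) {u : ℝ}

lemma nonempty_setOf_le_cdf (hu : u < 1) : {x | u ≤ cdf μ x}.Nonempty :=
  ((tendsto_cdf_atTop μ).eventually_const_le hu).exists

lemma bddBelow_setOf_le_cdf (hu : 0 < u) : BddBelow {x | u ≤ cdf μ x} := by
  obtain ⟨x₀, hx₀⟩ := ((tendsto_cdf_atBot μ).eventually_lt_const hu).exists
  exact ⟨x₀, fun x hx => le_of_not_ge fun hxx₀ => (hx.trans (monotone_cdf μ hxx₀)).not_gt hx₀⟩

lemma quantile_le_iff (hu₀ : 0 < u) (hu₁ : u < 1) {x : ℝ} :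
    quantile μ u ≤ x ↔ u ≤ cdf μ x := by
  refine ⟨fun h => (cdf μ).le_apply_of_forall_lt fun y hxy => ?_,
    fun h => csInf_le (bddBelow_setOf_le_cdf μ hu₀) h⟩
  obtain ⟨z, hz, hzy⟩ := (csInf_lt_iff (bddBelow_setOf_le_cdf μ hu₀)
    (nonempty_setOf_le_cdf μ hu₁)).mp (h.trans_lt hxy)
  exact hz.trans (monotone_cdf μ hzy.le)

lemma monotoneOn_quantile : MonotoneOn (quantile μ) (Ioo 0 1) :=
  fun _ hu _ hv huv => csInf_le_csInf (bddBelow_setOf_le_cdf μ hu.1)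
    (nonempty_setOf_le_cdf μ hv.2) fun _ hx => huv.trans hx

lemma aemeasurable_quantile : AEMeasurable (quantile μ) (volume.restrict (Ioo 0 1)) :=
  aemeasurable_restrict_of_monotoneOn measurableSet_Ioo (monotoneOn_quantile μ)

instance : IsProbabilityMeasure (volume.restrict (Ioo (0 : ℝ) 1)) :=
  ⟨by simp⟩

lemma map_quantile [IsProbabilityMeasure μ] :
    (volume.restrict (Ioo 0 1)).map (quantile μ) = μ := by
  have := Measure.isProbabilityMeasure_map (aemeasurable_quantile μ)
  refine Measure.eq_of_cdf _ _ (StieltjesFunction.ext fun x => ?_)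
  have hpre : quantile μ ⁻¹' Iic x ∩ Ioo 0 1 = Ioc 0 (cdf μ x) ∩ Ioo 0 1 := by
    ext u
    simp only [mem_inter_iff, mem_preimage, mem_Iic, mem_Ioc, mem_Ioo]
    constructor
    · rintro ⟨h, hu⟩
      exact ⟨⟨hu.1, (quantile_le_iff μ hu.1 hu.2).mp h⟩, hu⟩
    · rintro ⟨⟨-, h⟩, hu⟩
      exact ⟨(quantile_le_iff μ hu.1 hu.2).mpr h, hu⟩
  rw [cdf_eq_real, map_measureReal_apply_of_aemeasurable (aemeasurable_quantile μ)
    measurableSet_Iic, measureReal_restrict_apply₀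
      ((aemeasurable_quantile μ).nullMeasurableSet_preimage measurableSet_Iic), hpre,
    ← measureReal_restrict_apply' measurableSet_Ioo, Measure.restrict_congr_set Ioo_ae_eq_Ioc,
    measureReal_restrict_apply' measurableSet_Ioc, Ioc_inter_Ioc]
  simp [cdf_le_one, cdf_nonneg]

end Quantile

lemma quantile_le_quantile_of_cdf_le {α β : Measure ℝ} (hcdf : ∀ x, cdf β x ≤ cdf α x) {u : ℝ}
    (hu : u ∈ Ioo 0 1) : quantile α u ≤ quantile β u :=
  (quantile_le_iff α hu.1 hu.2).mpr <|
    ((quantile_le_iff β hu.1 hu.2).mp le_rfl).trans (hcdf _)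

lemma measure_setOf_le_eq_one_iff {γ : Measure (ℝ × ℝ)} [IsProbabilityMeasure γ] :
    γ {p | p.1 ≤ p.2} = 1 ↔ ∀ᵐ p ∂γ, p.1 ≤ p.2 := by
  rw [ae_iff_measure_eq (measurableSet_le measurable_fst measurable_snd).nullMeasurableSet,
    measure_univ]

lemma exists_isotone_coupling_of_cdf_le (α β : Measure ℝ) [IsProbabilityMeasure α]
    [IsProbabilityMeasure β] (hcdf : ∀ x, cdf β x ≤ cdf α x) :
    ∃ γ : Measure (ℝ × ℝ), IsProbabilityMeasure γ ∧
      γ.map Prod.fst = α ∧ γ.map Prod.snd = β ∧ γ {p : ℝ × ℝ | p.1 ≤ p.2} = 1 := by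
  set U := volume.restrict (Ioo (0 : ℝ) 1)
  have hq : AEMeasurable (fun u => (quantile α u, quantile β u)) U :=
    (aemeasurable_quantile α).prodMk (aemeasurable_quantile β)
  have := Measure.isProbabilityMeasure_map hq
  refine ⟨U.map fun u => (quantile α u, quantile β u), this, ?_, ?_, ?_⟩
  · rw [AEMeasurable.map_map_of_aemeasurable measurable_fst.aemeasurable hq]
    exact map_quantile α
  · rw [AEMeasurable.map_map_of_aemeasurable measurable_snd.aemeasurable hq]
    exact map_quantile β
  · rw [measure_setOf_le_eq_one_iff, ae_map_iff hq
      (measurableSet_le measurable_fst measurable_snd)]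
    exact (ae_restrict_iff' measurableSet_Ioo).mpr
      (ae_of_all _ fun u hu => quantile_le_quantile_of_cdf_le hcdf hu)

section Marginals

variable {X Y : Type*} [MeasurableSpace X] [MeasurableSpace Y] {μ : Measure X} {ν : Measure Y}
  {γ : Measure (X × Y)} {f : X → ℝ} {g : Y → ℝ}

lemma integral_comp_fst_of_map_fst_eq (h : γ.map Prod.fst = μ) (hf : AEStronglyMeasurable f μ) :
    ∫ p, f p.1 ∂γ = ∫ x, f x ∂μ := by
  subst h
  exact (integral_map measurable_fst.aemeasurable hf).symm

lemma integral_comp_snd_of_map_snd_eq (h : γ.map Prod.snd = ν) (hg : AEStronglyMeasurable g ν) :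
    ∫ p, g p.2 ∂γ = ∫ y, g y ∂ν := by
  subst h
  exact (integral_map measurable_snd.aemeasurable hg).symm

lemma MeasureTheory.Integrable.comp_fst_of_map_fst_eq (h : γ.map Prod.fst = μ)
    (hf : Integrable f μ) : Integrable (fun p => f p.1) γ := by
  subst h
  exact hf.comp_measurable measurable_fst

lemma MeasureTheory.Integrable.comp_snd_of_map_snd_eq (h : γ.map Prod.snd = ν)
    (hg : Integrable g ν) : Integrable (fun p => g p.2) γ := by
  subst h
  exact hg.comp_measurable measurable_snd

end Marginals

section StochasticDominance

variable {α β : Measure ℝ} {γ : Measure (ℝ × ℝ)}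

lemma stochDom_of_isotone_coupling [IsProbabilityMeasure α] [IsProbabilityMeasure β]
    (hγ : IsProbabilityMeasure γ) (h₁ : γ.map Prod.fst = α) (h₂ : γ.map Prod.snd = β)
    (hiso : γ {p : ℝ × ℝ | p.1 ≤ p.2} = 1) : StochDom α β := by
  rintro f hf ⟨C, hC⟩
  have hfα : Integrable f α :=
    .of_bound hf.measurable.aestronglyMeasurable C (ae_of_all _ hC)
  have hfβ : Integrable f β :=
    .of_bound hf.measurable.aestronglyMeasurable C (ae_of_all _ hC)
  rw [← integral_comp_fst_of_map_fst_eq h₁ hfα.aestronglyMeasurable,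
    ← integral_comp_snd_of_map_snd_eq h₂ hfβ.aestronglyMeasurable]
  refine integral_mono_ae (hfα.comp_fst_of_map_fst_eq h₁) (hfβ.comp_snd_of_map_snd_eq h₂) ?_
  filter_upwards [measure_setOf_le_eq_one_iff.mp hiso] with p hp
  exact hf hp

lemma cdf_le_cdf_of_stochDom [IsProbabilityMeasure α] [IsProbabilityMeasure β]
    (h : StochDom α β) (x : ℝ) : cdf β x ≤ cdf α x := by
  have hmono : Monotone ((Ioi x).indicator (1 : ℝ → ℝ)) := by
    intro y z hyz
    by_cases hy : x < y
    · simp [indicator_of_mem, hy, hy.trans_le hyz]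
    · simp [indicator_of_notMem, hy, indicator_nonneg]
  have hbdd : ∃ C, ∀ y, |(Ioi x).indicator (1 : ℝ → ℝ) y| ≤ C :=
    ⟨1, fun y => by by_cases hy : x < y <;> simp [hy]⟩
  have := h _ hmono hbdd
  rwa [integral_indicator_one measurableSet_Ioi, integral_indicator_one measurableSet_Ioi,
    ← compl_Iic, probReal_compl_eq_one_sub measurableSet_Iic,
    probReal_compl_eq_one_sub measurableSet_Iic, ← cdf_eq_real, ← cdf_eq_real, sub_le_sub_iff_left]
    at this

end StochasticDominance

section Wasserstein

variable {α β : Measure ℝ} {γ : Measure (ℝ × ℝ)}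

lemma W1_le_integral (hγ : IsProbabilityMeasure γ) (h₁ : γ.map Prod.fst = α)
    (h₂ : γ.map Prod.snd = β) : W1 α β ≤ ∫ p, |p.1 - p.2| ∂γ :=
  csInf_le ⟨0, by rintro r ⟨γ', -, -, -, rfl⟩; positivity⟩ ⟨γ, hγ, h₁, h₂, rfl⟩

lemma exists_integral_lt_W1_add [IsProbabilityMeasure α] [IsProbabilityMeasure β] {ε : ℝ}
    (hε : 0 < ε) : ∃ γ : Measure (ℝ × ℝ), IsProbabilityMeasure γ ∧
      γ.map Prod.fst = α ∧ γ.map Prod.snd = β ∧ ∫ p, |p.1 - p.2| ∂γ < W1 α β + ε := by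
  have hne : {r : ℝ | ∃ γ : Measure (ℝ × ℝ), IsProbabilityMeasure γ ∧
      γ.map Prod.fst = α ∧ γ.map Prod.snd = β ∧ r = ∫ p, |p.1 - p.2| ∂γ}.Nonempty :=
    ⟨_, α.prod β, inferInstance, by simp, by simp, rfl⟩
  obtain ⟨r, ⟨γ, hγ, h₁, h₂, rfl⟩, hr⟩ := exists_lt_of_csInf_lt hne (lt_add_of_pos_right _ hε)
  exact ⟨γ, hγ, h₁, h₂, hr⟩

lemma integral_sub_eq_of_coupling (hα : Integrable (fun x => x) α)
    (hβ : Integrable (fun y => y) β) (h₁ : γ.map Prod.fst = α) (h₂ : γ.map Prod.snd = β) :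
    ∫ p, (p.2 - p.1) ∂γ = ∫ y, y ∂β - ∫ x, x ∂α := by
  rw [integral_sub (hβ.comp_snd_of_map_snd_eq h₂) (hα.comp_fst_of_map_fst_eq h₁),
    integral_comp_snd_of_map_snd_eq h₂ hβ.aestronglyMeasurable,
    integral_comp_fst_of_map_fst_eq h₁ hα.aestronglyMeasurable]

lemma sub_le_integral_abs_sub (hα : Integrable (fun x => x) α)
    (hβ : Integrable (fun y => y) β) (h₁ : γ.map Prod.fst = α) (h₂ : γ.map Prod.snd = β) :
    ∫ y, y ∂β - ∫ x, x ∂α ≤ ∫ p, |p.1 - p.2| ∂γ := by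
  rw [← integral_sub_eq_of_coupling hα hβ h₁ h₂]
  exact integral_mono ((hβ.comp_snd_of_map_snd_eq h₂).sub (hα.comp_fst_of_map_fst_eq h₁))
    ((hα.comp_fst_of_map_fst_eq h₁).sub (hβ.comp_snd_of_map_snd_eq h₂)).abs
    fun p => neg_sub p.1 p.2 ▸ neg_le_abs _

lemma sub_le_W1 [IsProbabilityMeasure α] [IsProbabilityMeasure β]
    (hα : Integrable (fun x => x) α) (hβ : Integrable (fun y => y) β) :
    ∫ y, y ∂β - ∫ x, x ∂α ≤ W1 α β := by
  refine le_of_forall_pos_lt_add fun ε hε => ?_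
  obtain ⟨γ, -, h₁, h₂, hγ⟩ := exists_integral_lt_W1_add (α := α) (β := β) hε
  exact (sub_le_integral_abs_sub hα hβ h₁ h₂).trans_lt hγ

lemma W1_eq_of_isotone_coupling [IsProbabilityMeasure α] [IsProbabilityMeasure β]
    (hα : Integrable (fun x => x) α) (hβ : Integrable (fun y => y) β)
    (hγ : IsProbabilityMeasure γ) (h₁ : γ.map Prod.fst = α) (h₂ : γ.map Prod.snd = β)
    (hiso : γ {p : ℝ × ℝ | p.1 ≤ p.2} = 1) :
    W1 α β = ∫ y, y ∂β - ∫ x, x ∂α := by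
  have hcost : ∫ p, |p.1 - p.2| ∂γ = ∫ p, (p.2 - p.1) ∂γ :=
    integral_congr_ae <| (measure_setOf_le_eq_one_iff.mp hiso).mono fun p hp =>
      (abs_of_nonpos (sub_nonpos.mpr hp)).trans (neg_sub _ _)
  refine le_antisymm ?_ (sub_le_W1 hα hβ)
  rw [← integral_sub_eq_of_coupling hα hβ h₁ h₂, ← hcost]
  exact W1_le_integral hγ h₁ h₂

lemma mul_measureReal_le_integral_abs_sub_sub [IsFiniteMeasure γ]
    (hα : Integrable (fun x => x) α) (hβ : Integrable (fun y => y) β)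
    (h₁ : γ.map Prod.fst = α) (h₂ : γ.map Prod.snd = β) {δ : ℝ} (hδ : 0 ≤ δ) :
    2 * δ * γ.real {p | δ ≤ p.1 - p.2} ≤
      ∫ p, |p.1 - p.2| ∂γ - (∫ y, y ∂β - ∫ x, x ∂α) := by
  have hd : Integrable (fun p : ℝ × ℝ => p.1 - p.2) γ :=
    (hα.comp_fst_of_map_fst_eq h₁).sub (hβ.comp_snd_of_map_snd_eq h₂)
  have hd_integral : ∫ p, (p.1 - p.2) ∂γ = -(∫ y, y ∂β - ∫ x, x ∂α) := by
    rw [← integral_sub_eq_of_coupling hα hβ h₁ h₂, ← integral_neg]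
    simp only [neg_sub]
  have hmarkov := mul_meas_ge_le_integral_of_nonneg
    (ae_of_all γ fun p => neg_le_iff_add_nonneg.mp (neg_abs_le (p.1 - p.2))) (hd.add hd.abs)
    (2 * δ)
  rw [integral_add hd hd.abs, hd_integral, neg_add_eq_sub] at hmarkov
  refine le_trans (mul_le_mul_of_nonneg_left (measureReal_mono fun p (hp : δ ≤ p.1 - p.2) =>
    show 2 * δ ≤ _ by linarith [le_abs_self (p.1 - p.2)]) (by positivity)) hmarkov

lemma cdf_le_cdf_add_measureReal [IsProbabilityMeasure α] [IsProbabilityMeasure β]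
    [IsFiniteMeasure γ] (h₁ : γ.map Prod.fst = α) (h₂ : γ.map Prod.snd = β) (s t : ℝ) :
    cdf β s ≤ cdf α t + γ.real {p | t - s ≤ p.1 - p.2} := by
  rw [cdf_eq_real, cdf_eq_real, ← h₁, ← h₂,
    map_measureReal_apply measurable_snd measurableSet_Iic,
    map_measureReal_apply measurable_fst measurableSet_Iic]
  refine (measureReal_mono (s₂ := Prod.fst ⁻¹' Iic t ∪ {p | t - s ≤ p.1 - p.2})
    fun p (hp : p.2 ≤ s) => ?_).trans (measureReal_union_le _ _)
  rcases le_or_gt p.1 t with ht | ht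
  · exact Or.inl ht
  · exact Or.inr (show t - s ≤ p.1 - p.2 by linarith)

lemma cdf_le_cdf_of_W1_eq [IsProbabilityMeasure α] [IsProbabilityMeasure β]
    (hα : Integrable (fun x => x) α) (hβ : Integrable (fun y => y) β)
    (hW : W1 α β = ∫ y, y ∂β - ∫ x, x ∂α) (x : ℝ) : cdf β x ≤ cdf α x := by
  refine (cdf α).le_apply_of_forall_lt fun t hxt => le_of_forall_pos_le_add fun ε hε => ?_
  have hδ : 0 < 2 * (t - x) := by linarith
  obtain ⟨γ, hγ, h₁, h₂, hcost⟩ := exists_integral_lt_W1_add (α := α) (β := β) (mul_pos hδ hε)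
  have hmass : γ.real {p | t - x ≤ p.1 - p.2} < ε := by
    refine (mul_lt_mul_iff_right₀ hδ).mp ((mul_measureReal_le_integral_abs_sub_sub hα hβ h₁ h₂
      (sub_nonneg.mpr hxt.le)).trans_lt ?_)
    linarith
  linarith [cdf_le_cdf_add_measureReal h₁ h₂ x t]

end Wasserstein

theorem wasserstein_eq_barycenter_gap_iff_general
    (α β : Measure ℝ) [IsProbabilityMeasure α] [IsProbabilityMeasure β]
    (hα : Integrable (fun x => |x|) α) (hβ : Integrable (fun x => |x|) β)
    (a b : ℝ) (ha : a = ∫ y, y ∂α) (hb : b = ∫ y, y ∂β) :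
    (W1 α β = b - a ↔ StochDom α β) ∧
    (W1 α β = b - a ↔ ∃ γ : Measure (ℝ × ℝ), IsProbabilityMeasure γ ∧
      γ.map Prod.fst = α ∧ γ.map Prod.snd = β ∧
      γ {p : ℝ × ℝ | p.1 ≤ p.2} = 1) := by
  subst ha hb
  replace hα : Integrable (fun x => x) α := integrable_norm_iff aestronglyMeasurable_id |>.mp hα
  replace hβ : Integrable (fun y => y) β := integrable_norm_iff aestronglyMeasurable_id |>.mp hβ
  have hcoupling : W1 α β = ∫ y, y ∂β - ∫ x, x ∂α ↔ ∃ γ : Measure (ℝ × ℝ),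
      IsProbabilityMeasure γ ∧ γ.map Prod.fst = α ∧ γ.map Prod.snd = β ∧
        γ {p : ℝ × ℝ | p.1 ≤ p.2} = 1 :=
    ⟨fun hW => exists_isotone_coupling_of_cdf_le α β (cdf_le_cdf_of_W1_eq hα hβ hW),
      fun ⟨γ, hγ, h₁, h₂, hiso⟩ => W1_eq_of_isotone_coupling hα hβ hγ h₁ h₂ hiso⟩
  refine ⟨hcoupling.trans ⟨?_, ?_⟩, hcoupling⟩
  · exact fun ⟨γ, hγ, h₁, h₂, hiso⟩ => stochDom_of_isotone_coupling hγ h₁ h₂ hiso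
  · exact fun hdom => exists_isotone_coupling_of_cdf_le α β (cdf_le_cdf_of_stochDom hdom)

/-- for probability measures `α, β` on `ℝ` with finite first moments and
barycenters `a ≤ b`, one has `W(α,β) = b − a` iff `α ≤_st β` in first-order stochastic
dominance, equivalently iff there is an isotone coupling `γ ∈ Π(α,β)`, i.e.
`γ({(y,y') : y ≤ y'}) = 1`. -/
theorem wasserstein_eq_barycenter_gap_iff
    (α β : Measure ℝ) [IsProbabilityMeasure α] [IsProbabilityMeasure β]
    (hα : Integrable (fun x => |x|) α) (hβ : Integrable (fun x => |x|) β)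
    (a b : ℝ) (ha : a = ∫ y, y ∂α) (hb : b = ∫ y, y ∂β) (hab : a ≤ b) :
    (W1 α β = b - a ↔ StochDom α β) ∧
    (W1 α β = b - a ↔ ∃ γ : Measure (ℝ × ℝ), IsProbabilityMeasure γ ∧
      γ.map Prod.fst = α ∧ γ.map Prod.snd = β ∧
      γ {p : ℝ × ℝ | p.1 ≤ p.2} = 1) :=
  wasserstein_eq_barycenter_gap_iff_general α β hα hβ a b ha hb
end

section
/- Let R ⊆ ℝ₊ × ℝ be a barrier, i.e., a closed set such that (s,x) ∈ R and s < t implies (t,x) ∈ R. For a continuous path ω: ℝ₊ → ℝ with ω(0) = 0 and real numbers x < x', let τ(x) be the first hitting time of R by the space-time path t ↦ (t, x + ω(t)) and τ(x') that for x' + ω. If both hitting times are finite, then x + ω(τ(x)) ≤ x' + ω(τ(x')). -/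
/-!
Suppose `x + ω τ > x' + ω τ'`. If `τ' ≤ τ`, the lower path `x + ω` starts below the level
`x' + ω τ'` at time `τ'` and ends above it at time `τ`, so it crosses that level at some
`s ∈ [τ', τ]`; since `R` is a barrier, `(s, x' + ω τ') ∈ R`, so the lower path hits `R` at `s`,
forcing `s = τ` and a contradiction. If `τ ≤ τ'`, the same argument applies to the upper path
crossing the level `x + ω τ` on `[τ, τ']`.
-/

open Set

def hittingSet (R : Set (ℝ × ℝ)) (f : ℝ → ℝ) : Set ℝ :=
  {t | 0 ≤ t ∧ (t, f t) ∈ R}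

theorem isClosed_hittingSet {R : Set (ℝ × ℝ)} {f : ℝ → ℝ} (hR : IsClosed R)
    (hf : Continuous f) : IsClosed (hittingSet R f) :=
  isClosed_Ici.inter (hR.preimage (continuous_id.prodMk hf))

theorem isLeast_sInf_hittingSet {R : Set (ℝ × ℝ)} {f : ℝ → ℝ} (hR : IsClosed R)
    (hf : Continuous f) (hne : (hittingSet R f).Nonempty) :
    IsLeast (hittingSet R f) (sInf (hittingSet R f)) :=
  (isClosed_hittingSet hR hf).isLeast_csInf hne ⟨0, fun _ ht => ht.1⟩

theorem eq_apply_of_mem_uIcc_of_isLeast_hittingSet {R : Set (ℝ × ℝ)}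
    (hbarrier : ∀ s x t, (s, x) ∈ R → s < t → (t, x) ∈ R) {f : ℝ → ℝ} {a τ y : ℝ}
    (hτ : IsLeast (hittingSet R f) τ) (ha : 0 ≤ a) (haτ : a ≤ τ)
    (hf : ContinuousOn f (Icc a τ)) (hay : (a, y) ∈ R) (hy : y ∈ uIcc (f a) (f τ)) :
    y = f τ := by
  rw [← uIcc_of_le haτ] at hf
  obtain ⟨s, hs, rfl⟩ := intermediate_value_uIcc hf hy
  rw [uIcc_of_le haτ] at hs
  obtain ⟨has, hsτ⟩ := hs
  have hs : (s, f s) ∈ R := by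
    rcases has.eq_or_lt with rfl | has
    · exact hay
    · exact hbarrier a (f s) s hay has
  rw [le_antisymm hsτ (hτ.2 ⟨ha.trans has, hs⟩)]

theorem barrier_hitting_monotone_general
    (R : Set (ℝ × ℝ)) (hRclosed : IsClosed R)
    (hbarrier : ∀ s x t, (s, x) ∈ R → s < t → (t, x) ∈ R)
    (ω : ℝ → ℝ) (hω : Continuous ω)
    (x x' : ℝ) (hxx : x < x')
    (hne : {t : ℝ | 0 ≤ t ∧ (t, x + ω t) ∈ R}.Nonempty)
    (hne' : {t : ℝ | 0 ≤ t ∧ (t, x' + ω t) ∈ R}.Nonempty) :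
    x + ω (sInf {t : ℝ | 0 ≤ t ∧ (t, x + ω t) ∈ R}) ≤
      x' + ω (sInf {t : ℝ | 0 ≤ t ∧ (t, x' + ω t) ∈ R}) := by
  set τ := sInf {t : ℝ | 0 ≤ t ∧ (t, x + ω t) ∈ R}
  set τ' := sInf {t : ℝ | 0 ≤ t ∧ (t, x' + ω t) ∈ R}
  have hτ : IsLeast (hittingSet R (x + ω ·)) τ :=
    isLeast_sInf_hittingSet hRclosed (continuous_const.add hω) hne
  have hτ' : IsLeast (hittingSet R (x' + ω ·)) τ' :=
    isLeast_sInf_hittingSet hRclosed (continuous_const.add hω) hne'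
  by_contra! hlt
  rcases le_total τ' τ with hle | hle
  · have := eq_apply_of_mem_uIcc_of_isLeast_hittingSet hbarrier hτ hτ'.1.1 hle
      (continuous_const.add hω).continuousOn hτ'.1.2
      (mem_uIcc_of_le (by simp only; linarith) hlt.le)
    linarith
  · have := eq_apply_of_mem_uIcc_of_isLeast_hittingSet hbarrier hτ' hτ.1.1 hle
      (continuous_const.add hω).continuousOn hτ.1.2
      (mem_uIcc_of_ge hlt.le (by simp only; linarith))
    linarith

/-- barrier monotonicity. Let `R ⊆ ℝ₊ × ℝ` be a closed barrier
(`(s,x) ∈ R` and `s < t` imply `(t,x) ∈ R`).  For a continuous path `ω` with `ω 0 = 0`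
and `x < x'`, if the space-time paths `t ↦ (t, x + ω t)` and `t ↦ (t, x' + ω t)` both hit
`R` (at their first hitting times `τ, τ'`), then `x + ω τ ≤ x' + ω τ'`. -/
theorem barrier_hitting_monotone
    (R : Set (ℝ × ℝ)) (hRclosed : IsClosed R) (hRsub : R ⊆ {p | 0 ≤ p.1})
    (hbarrier : ∀ s x t, (s, x) ∈ R → s < t → (t, x) ∈ R)
    (ω : ℝ → ℝ) (hω : Continuous ω) (hω0 : ω 0 = 0)
    (x x' : ℝ) (hxx : x < x')
    (hne : {t : ℝ | 0 ≤ t ∧ (t, x + ω t) ∈ R}.Nonempty)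
    (hne' : {t : ℝ | 0 ≤ t ∧ (t, x' + ω t) ∈ R}.Nonempty) :
    x + ω (sInf {t : ℝ | 0 ≤ t ∧ (t, x + ω t) ∈ R}) ≤
      x' + ω (sInf {t : ℝ | 0 ≤ t ∧ (t, x' + ω t) ∈ R}) :=
  barrier_hitting_monotone_general R hRclosed hbarrier ω hω x x' hxx hne hne'
end

section
/- Let Q ⊆ [0,1] be countable and P a martingale measure on ℝ^Q. Then P is Lipschitz-Markov (for all s < t in Q and f ∈ Lip₁ there exists g ∈ Lip₁ with E_P[f(S_t) | F_s] = g(S_s) a.s.) if and only if for all f ∈ Lip₁, all s < t in Q, and all non-negative bounded F_s-measurable X, Y: E_P[X f(S_t)]·E_P[Y] − E_P[X]·E_P[Y f(S_t)] ≤ ∫∫ X(ω) Y(ω̄) |ω_s − ω̄_s| d(P⊗P)(ω, ω̄). -/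
/-!
Forward: if `E[f(S_t) | F_s] = g(S_s)` with `g` `1`-Lipschitz, replacing `f(S_t)` by `g(S_s)` turns
the left-hand side into `∫∫ X(ω) Y(ω̄) (g(ω_s) - g(ω̄_s))`, which the Lipschitz bound dominates.

Backward: let `h = E[f(S_t) | F_s]` and let `κ` be the law of `(S_s, h)`. Testing the inequality
with indicators of the preimages of small balls around two points `p, q` of the support of `κ`
gives `p.2 - q.2 ≤ |p.1 - q.1|`. So the support of `κ` lies in the graph of a `1`-Lipschitz `g`
(McShane extension), and since `(S_s, h)` lies in the support almost surely, `h = g(S_s)` a.s.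
-/

open MeasureTheory Set

/-- The natural filtration of the canonical process on `ℝ^Q`. -/
noncomputable def natFiltration (Q : Type*) [Preorder Q] :
    Filtration Q (MeasurableSpace.pi : MeasurableSpace (Q → ℝ)) where
  seq i := ⨆ t ∈ Set.Iic i, MeasurableSpace.comap (fun ω : Q → ℝ => ω t) inferInstance
  mono' i j hij := by
    refine iSup_le fun t => iSup_le fun ht => ?_
    exact le_iSup₂ (f := fun (t : Q) (_ : t ∈ Set.Iic j) =>
      MeasurableSpace.comap (fun ω : Q → ℝ => ω t) inferInstance) t (ht.trans hij)
  le' i := by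
    refine iSup_le fun t => iSup_le fun _ => ?_
    exact (measurable_pi_apply t).comap_le

/-- A measure `P` on `ℝ^Q` is Lipschitz-Markov if for all `s < t` in `Q` and every
`1`-Lipschitz `f` there is a `1`-Lipschitz `g` with `E_P[f(S_t) | F_s] = g(S_s)` a.s. -/
def LipschitzMarkov (Q : Set ℝ) (P : Measure (↥Q → ℝ)) : Prop :=
  ∀ s t : ↥Q, s < t → ∀ f : ℝ → ℝ, LipschitzWith 1 f →
    ∃ g : ℝ → ℝ, LipschitzWith 1 g ∧
      P[(fun ω : ↥Q → ℝ => f (ω t)) | natFiltration ↥Q s] =ᵐ[P] fun ω => g (ω s)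

open Filter

theorem LipschitzWith.integrable_comp {Ω E F : Type*} [MeasurableSpace Ω] {μ : Measure Ω}
    [IsFiniteMeasure μ] [NormedAddCommGroup E] [NormedAddCommGroup F] {f : E → F}
    {K : NNReal} (hf : LipschitzWith K f) {u : Ω → E} (hu : Integrable u μ) :
    Integrable (fun ω => f (u ω)) μ := by
  refine ((integrable_const ‖f 0‖).add (hu.norm.const_mul K)).mono'
    (hf.continuous.comp_aestronglyMeasurable hu.1) (ae_of_all _ fun ω => ?_)
  calc ‖f (u ω)‖ ≤ ‖f 0‖ + ‖f (u ω) - f 0‖ := norm_le_insert' _ _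
    _ ≤ ‖f 0‖ + K * ‖u ω - 0‖ := by gcongr; exact hf.norm_sub_le _ _
    _ = ‖f 0‖ + K * ‖u ω‖ := by rw [sub_zero]

theorem exists_lipschitzWith_eq_of_sub_le_dist {α : Type*} [PseudoMetricSpace α]
    {S : Set (α × ℝ)} (hS : ∀ p ∈ S, ∀ q ∈ S, p.2 - q.2 ≤ dist p.1 q.1) :
    ∃ g : α → ℝ, LipschitzWith 1 g ∧ ∀ p ∈ S, g p.1 = p.2 := by
  classical
  have snd_eq : ∀ p ∈ S, ∀ q ∈ S, p.1 = q.1 → p.2 = q.2 := fun p hp q hq h =>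
    le_antisymm (by simpa [h] using hS p hp q hq) (by simpa [h] using hS q hq p hp)
  let φ : α → ℝ := fun x => if h : ∃ p ∈ S, p.1 = x then h.choose.2 else 0
  have φ_eq : ∀ p ∈ S, φ p.1 = p.2 := fun p hp => by
    have h : ∃ q ∈ S, q.1 = p.1 := ⟨p, hp, rfl⟩
    simp only [φ, dif_pos h]
    exact snd_eq _ h.choose_spec.1 p hp h.choose_spec.2
  have hφ : LipschitzOnWith 1 φ (Prod.fst '' S) := by
    refine LipschitzOnWith.of_le_add_mul 1 ?_
    rintro _ ⟨p, hp, rfl⟩ _ ⟨q, hq, rfl⟩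
    rw [φ_eq p hp, φ_eq q hq, NNReal.coe_one, one_mul]
    linarith [hS p hp q hq]
  obtain ⟨g, hg, hφg⟩ := hφ.extend_real
  exact ⟨g, hg, fun p hp => (hφg (mem_image_of_mem _ hp)).symm.trans (φ_eq p hp)⟩

section Bilinear

variable {Ω : Type*} {m m0 : MeasurableSpace Ω} {P : Measure Ω}

theorem integral_mul_condExp_of_stronglyMeasurable (hm : m ≤ m0) [SigmaFinite (P.trim hm)]
    {X F : Ω → ℝ} (hX : StronglyMeasurable[m] X) {C : ℝ} (hXC : ∀ ω, ‖X ω‖ ≤ C)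
    (hF : Integrable F P) :
    ∫ ω, X ω * (P[F|m]) ω ∂P = ∫ ω, X ω * F ω ∂P := by
  have hXF : Integrable (fun ω => X ω * F ω) P :=
    hF.bdd_mul (hX.mono hm).aestronglyMeasurable (ae_of_all _ hXC)
  rw [← integral_condExp hm (f := fun ω => X ω * F ω)]
  exact integral_congr_ae (condExp_mul_of_stronglyMeasurable_left hX hXF hF).symm

variable (m P) in
/-- With `u = S_s` and `F = f(S_t)` this is the inequality of the theorem. -/
def LipschitzBilinearBound (u F : Ω → ℝ) : Prop :=
  ∀ X Y : Ω → ℝ, Measurable[m] X → Measurable[m] Y →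
    (∀ ω, 0 ≤ X ω) → (∀ ω, 0 ≤ Y ω) → (∃ C, ∀ ω, X ω ≤ C) → (∃ C, ∀ ω, Y ω ≤ C) →
    (∫ ω, X ω * F ω ∂P) * (∫ ω, Y ω ∂P) - (∫ ω, X ω ∂P) * (∫ ω, Y ω * F ω ∂P) ≤
      ∫ p, X p.1 * Y p.2 * |u p.1 - u p.2| ∂(P.prod P)

theorem integrable_mul_mul_abs_sub [IsFiniteMeasure P] {X Y u : Ω → ℝ}
    (hX : AEStronglyMeasurable X P) (hY : AEStronglyMeasurable Y P) {Cx Cy : ℝ}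
    (hXC : ∀ ω, ‖X ω‖ ≤ Cx) (hYC : ∀ ω, ‖Y ω‖ ≤ Cy) (hu : Integrable u P) :
    Integrable (fun p : Ω × Ω => X p.1 * Y p.2 * |u p.1 - u p.2|) (P.prod P) :=
  ((hu.comp_fst P).sub (hu.comp_snd P)).abs.bdd_mul (hX.comp_fst.mul hY.comp_snd)
    (ae_of_all _ fun p => by
      simpa only [norm_mul] using mul_le_mul (hXC p.1) (hYC p.2) (norm_nonneg _)
        ((norm_nonneg _).trans (hXC p.1)))

theorem lipschitzBilinearBound_of_condExp_eq_comp (hm : m ≤ m0) [IsFiniteMeasure P]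
    {u F : Ω → ℝ} (hu : Integrable u P) (hF : Integrable F P) {g : ℝ → ℝ}
    (hg : LipschitzWith 1 g) (hcond : P[F|m] =ᵐ[P] fun ω => g (u ω)) :
    LipschitzBilinearBound m P u F := by
  rintro X Y hX hY hX0 hY0 ⟨Cx, hXC⟩ ⟨Cy, hYC⟩
  have norm_le : ∀ {Z : Ω → ℝ} {C : ℝ}, (∀ ω, 0 ≤ Z ω) → (∀ ω, Z ω ≤ C) → ∀ ω, ‖Z ω‖ ≤ C :=
    fun hZ0 hZC ω => by rw [Real.norm_of_nonneg (hZ0 ω)]; exact hZC ω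
  have hXn := norm_le hX0 hXC
  have hYn := norm_le hY0 hYC
  have hXm := (hX.stronglyMeasurable.mono hm).aestronglyMeasurable (μ := P)
  have hYm := (hY.stronglyMeasurable.mono hm).aestronglyMeasurable (μ := P)
  have hgu : Integrable (fun ω => g (u ω)) P := hg.integrable_comp hu
  have replace_F : ∀ {Z : Ω → ℝ} {C : ℝ}, Measurable[m] Z → (∀ ω, ‖Z ω‖ ≤ C) →
      ∫ ω, Z ω * F ω ∂P = ∫ ω, Z ω * g (u ω) ∂P := fun hZ hZC => by
    rw [← integral_mul_condExp_of_stronglyMeasurable hm hZ.stronglyMeasurable hZC hF]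
    exact integral_congr_ae (EventuallyEq.rfl.mul hcond)
  have hX1 := Integrable.of_bound hXm _ (ae_of_all _ hXn)
  have hY1 := Integrable.of_bound hYm _ (ae_of_all _ hYn)
  have hXg := hgu.bdd_mul hXm (ae_of_all _ hXn)
  have hYg := hgu.bdd_mul hYm (ae_of_all _ hYn)
  rw [replace_F hX hXn, replace_F hY hYn, ← integral_prod_mul, ← integral_prod_mul,
    ← integral_sub (hXg.mul_prod hY1) (hX1.mul_prod hYg)]
  refine integral_mono ((hXg.mul_prod hY1).sub (hX1.mul_prod hYg))
    (integrable_mul_mul_abs_sub hXm hYm hXn hYn hu) fun p => ?_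
  have hg_sub : g (u p.1) - g (u p.2) ≤ |u p.1 - u p.2| := by
    simpa [Real.dist_eq] using (le_abs_self _).trans (hg.dist_le_mul (u p.1) (u p.2))
  calc X p.1 * g (u p.1) * Y p.2 - X p.1 * (Y p.2 * g (u p.2))
      = X p.1 * Y p.2 * (g (u p.1) - g (u p.2)) := by ring
    _ ≤ X p.1 * Y p.2 * |u p.1 - u p.2| :=
      mul_le_mul_of_nonneg_left hg_sub (mul_nonneg (hX0 _) (hY0 _))

theorem sub_le_of_lipschitzBilinearBound (hm : m ≤ m0) [IsFiniteMeasure P] {u F : Ω → ℝ}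
    (hF : Integrable F P) (hbound : LipschitzBilinearBound m P u F) {A B : Set Ω}
    (hA : MeasurableSet[m] A) (hB : MeasurableSet[m] B) (hPA : P A ≠ 0) (hPB : P B ≠ 0)
    {a b r : ℝ} (ha : ∀ ω ∈ A, a ≤ P[F|m] ω) (hb : ∀ ω ∈ B, P[F|m] ω ≤ b)
    (hr : ∀ ω ∈ A, ∀ ω' ∈ B, |u ω - u ω'| ≤ r) :
    a - b ≤ r := by
  have indicator_one_nonneg : ∀ (S : Set Ω) ω, 0 ≤ S.indicator (1 : Ω → ℝ) ω :=
    fun S => indicator_nonneg fun _ _ => zero_le_one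
  have indicator_mul : ∀ {S : Set Ω}, MeasurableSet[m] S →
      ∫ ω, S.indicator 1 ω * F ω ∂P = ∫ ω in S, P[F|m] ω ∂P := fun hS => by
    simp only [← indicator_mul_left, Pi.one_apply, one_mul]
    rw [integral_indicator (hm _ hS), setIntegral_condExp hm hF hS]
  have hA_int : a * P.real A ≤ ∫ ω in A, P[F|m] ω ∂P :=
    setIntegral_ge_of_const_le_real (hm _ hA) (measure_ne_top _ _) ha
      integrable_condExp.integrableOn
  have hB_int : -b * P.real B ≤ -∫ ω in B, P[F|m] ω ∂P := by
    rw [← integral_neg]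
    exact setIntegral_ge_of_const_le_real (hm _ hB) (measure_ne_top _ _)
      (fun ω hω => neg_le_neg (hb ω hω)) integrable_condExp.neg.integrableOn
  have hrhs : ∫ p, A.indicator 1 p.1 * B.indicator (1 : Ω → ℝ) p.2 * |u p.1 - u p.2| ∂(P.prod P)
      ≤ r * (P.real A * P.real B) := by
    have hAB := (hm _ hA).prod (hm _ hB)
    refine (integral_mono_of_nonneg (ae_of_all _ fun p => ?_)
      ((integrable_const r).indicator hAB) (ae_of_all _ fun p => ?_)).trans_eq ?_
    · exact mul_nonneg (mul_nonneg (indicator_one_nonneg _ _) (indicator_one_nonneg _ _)) (abs_nonneg _)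
    · by_cases h1 : p.1 ∈ A
      · by_cases h2 : p.2 ∈ B
        · simpa [h1, h2] using hr _ h1 _ h2
        · simp [h2]
      · simp [h1]
    · rw [integral_indicator_const _ hAB, measureReal_prod_prod, smul_eq_mul, mul_comm]
  have key := hbound (A.indicator 1) (B.indicator 1) (measurable_const.indicator hA)
    (measurable_const.indicator hB) (indicator_one_nonneg A) (indicator_one_nonneg B)
    ⟨1, indicator_le_self' fun _ _ => zero_le_one⟩ ⟨1, indicator_le_self' fun _ _ => zero_le_one⟩
  rw [indicator_mul hA, indicator_mul hB, integral_indicator_one (hm _ hA),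
    integral_indicator_one (hm _ hB)] at key
  have hPA' : 0 < P.real A := ENNReal.toReal_pos hPA (measure_ne_top _ _)
  have hPB' : 0 < P.real B := ENNReal.toReal_pos hPB (measure_ne_top _ _)
  nlinarith [mul_pos hPA' hPB']

theorem exists_lipschitzWith_condExp_eq_comp (hm : m ≤ m0) [IsFiniteMeasure P]
    {u F : Ω → ℝ} (hu : StronglyMeasurable[m] u) (hF : Integrable F P)
    (hbound : LipschitzBilinearBound m P u F) :
    ∃ g : ℝ → ℝ, LipschitzWith 1 g ∧ P[F|m] =ᵐ[P] fun ω => g (u ω) := by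
  set T : Ω → ℝ × ℝ := fun ω => (u ω, P[F|m] ω)
  have hT : Measurable[m] T := hu.measurable.prodMk stronglyMeasurable_condExp.measurable
  have hT0 : Measurable T := hT.mono hm le_rfl
  have graph : ∀ p ∈ (P.map T).support, ∀ q ∈ (P.map T).support,
      p.2 - q.2 ≤ dist p.1 q.1 := by
    intro p hp q hq
    refine le_of_forall_pos_lt_add fun ε hε => ?_
    have ball_pos : ∀ x ∈ (P.map T).support, P (T ⁻¹' Metric.ball x (ε / 5)) ≠ 0 :=
      fun x hx => by
        rw [← Measure.map_apply hT0 measurableSet_ball]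
        exact ((Measure.mem_support_iff_forall x).1 hx _
          (Metric.ball_mem_nhds x (by positivity))).ne'
    have near : ∀ x, ∀ ω ∈ T ⁻¹' Metric.ball x (ε / 5),
        dist (u ω) x.1 < ε / 5 ∧ dist (P[F|m] ω) x.2 < ε / 5 := fun x ω hω =>
      max_lt_iff.1 hω
    have := sub_le_of_lipschitzBilinearBound hm hF hbound (hT measurableSet_ball)
      (hT measurableSet_ball) (ball_pos p hp) (ball_pos q hq) (a := p.2 - ε / 5)
      (b := q.2 + ε / 5) (r := dist p.1 q.1 + 2 * (ε / 5))
      (fun ω hω => by linarith [(abs_lt.1 (near p ω hω).2).1])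
      (fun ω hω => by linarith [(abs_lt.1 (near q ω hω).2).2])
      (fun ω hω ω' hω' => by
        have := dist_triangle4 (u ω) p.1 q.1 (u ω')
        rw [dist_comm q.1] at this
        linarith [(near p ω hω).1, (near q ω' hω').1, Real.dist_eq (u ω) (u ω')])
    linarith
  obtain ⟨g, hg, hgS⟩ := exists_lipschitzWith_eq_of_sub_le_dist graph
  refine ⟨g, hg, ?_⟩
  filter_upwards [ae_of_ae_map hT0.aemeasurable (Measure.support_mem_ae (μ := P.map T))]
    with ω hω using (hgS _ hω).symm

end Bilinear

theorem lipschitz_markov_iff_bilinear_general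
    (Q : Set ℝ)
    (P : Measure (↥Q → ℝ)) [IsProbabilityMeasure P]
    (hmart : Martingale (fun (t : ↥Q) (ω : ↥Q → ℝ) => ω t) (natFiltration ↥Q) P) :
    LipschitzMarkov Q P ↔
    (∀ f : ℝ → ℝ, LipschitzWith 1 f → ∀ s t : ↥Q, s < t →
      ∀ X Y : (↥Q → ℝ) → ℝ,
        Measurable[natFiltration ↥Q s] X → Measurable[natFiltration ↥Q s] Y →
        (∀ ω, 0 ≤ X ω) → (∀ ω, 0 ≤ Y ω) →
        (∃ C, ∀ ω, X ω ≤ C) → (∃ C, ∀ ω, Y ω ≤ C) →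
        (∫ ω, X ω * f (ω t) ∂P) * (∫ ω, Y ω ∂P) -
            (∫ ω, X ω ∂P) * (∫ ω, Y ω * f (ω t) ∂P) ≤
          ∫ p, X p.1 * Y p.2 * |p.1 s - p.2 s| ∂(P.prod P)) := by
  have hF : ∀ {f : ℝ → ℝ}, LipschitzWith 1 f → ∀ t, Integrable (fun ω : ↥Q → ℝ => f (ω t)) P :=
    fun hf t => hf.integrable_comp (hmart.integrable t)
  constructor
  · intro hLM f hf s t hst
    obtain ⟨g, hg, hcond⟩ := hLM s t hst f hf
    exact lipschitzBilinearBound_of_condExp_eq_comp ((natFiltration ↥Q).le s)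
      (hmart.integrable s) (hF hf t) hg hcond
  · intro hbound s t hst f hf
    exact exists_lipschitzWith_condExp_eq_comp ((natFiltration ↥Q).le s)
      (hmart.stronglyMeasurable s) (hF hf t) (hbound f hf s t hst)

/-- a martingale measure `P` on `ℝ^Q` is Lipschitz-Markov iff for all
`1`-Lipschitz `f`, all `s < t` in `Q` and all non-negative bounded `F_s`-measurable
`X, Y`, one has
`E[X f(S_t)]·E[Y] − E[X]·E[Y f(S_t)] ≤ ∫∫ X(ω) Y(ω̄) |ω_s − ω̄_s| d(P ⊗ P)`. -/
theorem lipschitz_markov_iff_bilinear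
    (Q : Set ℝ) [Countable ↥Q]
    (P : Measure (↥Q → ℝ)) [IsProbabilityMeasure P]
    (hmart : Martingale (fun (t : ↥Q) (ω : ↥Q → ℝ) => ω t) (natFiltration ↥Q) P) :
    LipschitzMarkov Q P ↔
    (∀ f : ℝ → ℝ, LipschitzWith 1 f → ∀ s t : ↥Q, s < t →
      ∀ X Y : (↥Q → ℝ) → ℝ,
        Measurable[natFiltration ↥Q s] X → Measurable[natFiltration ↥Q s] Y →
        (∀ ω, 0 ≤ X ω) → (∀ ω, 0 ≤ Y ω) →
        (∃ C, ∀ ω, X ω ≤ C) → (∃ C, ∀ ω, Y ω ≤ C) →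
        (∫ ω, X ω * f (ω t) ∂P) * (∫ ω, Y ω ∂P) -
            (∫ ω, X ω ∂P) * (∫ ω, Y ω * f (ω t) ∂P) ≤
          ∫ p, X p.1 * Y p.2 * |p.1 s - p.2 s| ∂(P.prod P)) :=
  lipschitz_markov_iff_bilinear_general Q P hmart
end
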